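/- Concave Jensen-type inequality for the trace norm: let φ : [0,∞) → [0,∞) be concave with φ(0) = 0, and let B₁,…,B_m be positive semidefinite n×n complex matrices. Then ‖ φ(Σₖ Bₖ) ‖₁ ≤ ‖ Σₖ φ(Bₖ) ‖₁, i.e., tr φ(Σₖ Bₖ) ≤ Σₖ tr φ(Bₖ). -/

import Mathlib

open Matrix
open scoped ComplexOrder

/-- Square root of a (Hermitian positive semidefinite) matrix via the
continuous functional calculus. -/
noncomputable def msqrt {n : Type*} [Fintype n] [DecidableEq n]
    (M : Matrix n n ℂ) : Matrix n n ℂ :=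
  cfc Real.sqrt M

/-- Real power of a (Hermitian positive semidefinite) matrix via the
continuous functional calculus. -/
noncomputable def mpow {n : Type*} [Fintype n] [DecidableEq n]
    (M : Matrix n n ℂ) (t : ℝ) : Matrix n n ℂ :=
  cfc (fun x : ℝ => x ^ t) M

/-- Continuous function applied to a Hermitian matrix via functional calculus. -/
noncomputable def mfun {n : Type*} [Fintype n] [DecidableEq n]
    (f : ℝ → ℝ) (M : Matrix n n ℂ) : Matrix n n ℂ :=
  cfc f M

/-- The absolute value `|M| = (Mᴴ M)^{1/2}` of a matrix. -/
noncomputable def matAbs {n : Type*} [Fintype n] [DecidableEq n]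
    (M : Matrix n n ℂ) : Matrix n n ℂ :=
  msqrt (Mᴴ * M)

/-- The absolute value `|Mᴴ| = (M Mᴴ)^{1/2}` of the adjoint of a matrix. -/
noncomputable def matAbsStar {n : Type*} [Fintype n] [DecidableEq n]
    (M : Matrix n n ℂ) : Matrix n n ℂ :=
  msqrt (M * Mᴴ)

/-- Trace norm (sum of singular values) of a matrix. -/
noncomputable def trNorm {n : Type*} [Fintype n] [DecidableEq n]
    (M : Matrix n n ℂ) : ℝ :=
  ((matAbs M).trace).re

/-- Operator norm of a matrix acting on Euclidean space. -/
noncomputable def opNorm {n : Type*} [Fintype n] [DecidableEq n]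
    (M : Matrix n n ℂ) : ℝ :=
  ‖Matrix.toEuclideanCLM (𝕜 := ℂ) M‖

/-- Frobenius (Hilbert-Schmidt) norm of a matrix. -/
noncomputable def frobNorm {n : Type*} [Fintype n] [DecidableEq n]
    (M : Matrix n n ℂ) : ℝ :=
  Real.sqrt ((Mᴴ * M).trace).re

/-- Geometric mean `A♯B = A^{1/2}(A^{-1/2} B A^{-1/2})^{1/2} A^{1/2}`
of (positive definite) matrices. -/
noncomputable def geom {n : Type*} [Fintype n] [DecidableEq n]
    (A B : Matrix n n ℂ) : Matrix n n ℂ :=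
  msqrt A * msqrt ((msqrt A)⁻¹ * B * (msqrt A)⁻¹) * msqrt A

/-- Weighted geometric mean `A♯_θB = A^{1/2}(A^{-1/2} B A^{-1/2})^θ A^{1/2}`. -/
noncomputable def geomW {n : Type*} [Fintype n] [DecidableEq n]
    (A B : Matrix n n ℂ) (θ : ℝ) : Matrix n n ℂ :=
  msqrt A * mpow ((msqrt A)⁻¹ * B * (msqrt A)⁻¹) θ * msqrt A

/-!
Both traces are sums of `φ` over eigenvalues. On a finite set of points of `[0, ∞)`, a concave
nondecreasing `φ` with `φ 0 = 0` is a nonnegative combination of the functions `t ↦ min t s`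
(peel off the last chord and induct), so it suffices to prove
`tr min(A + B, s) ≤ tr min(A, s) + tr min(B, s)` for positive semidefinite `A`, `B`.
For that, let `P`, `P'` be the spectral projections of `A`, `B` onto `(s, ∞)` and `Q` the range
projection of `P + P'`. Then `P, P' ≤ Q` and `tr Q = rank (P + P') ≤ tr P + tr P'`, while
`tr min(C, s) ≤ tr (C X) + s tr (1 - X)` for every `0 ≤ X ≤ 1`, with equality at `X = 1 - P`
for `C = A`. Taking `C = A + B` and `X = 1 - Q` gives the inequality.
-/

open Finset
open scoped MatrixOrder

theorem ConcaveOn.monotoneOn_of_bddBelow {f : ℝ → ℝ} {a : ℝ} (hf : ConcaveOn ℝ (Set.Ici a) f)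
    (hbdd : BddBelow (f '' Set.Ici a)) : MonotoneOn f (Set.Ici a) := by
  obtain ⟨c, hlb⟩ := hbdd
  have hc : ∀ x ∈ Set.Ici a, c ≤ f x := fun x hx => hlb (Set.mem_image_of_mem f hx)
  intro p hp q hq hpq
  by_contra! hlt
  have hpq' : p < q := hpq.lt_of_ne (by rintro rfl; exact hlt.false)
  -- the chord through `p` and `q` has negative slope, so by concavity `f z < c` at this `z`
  set z := q + (f q - c + 1) * (q - p) / (f p - f q)
  have hqz : q < z :=
    lt_add_of_pos_right q (div_pos (mul_pos (by linarith [hc q hq]) (by linarith)) (by linarith))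
  have hz : z ∈ Set.Ici a := (Set.mem_Ici.1 hq).trans hqz.le
  have hslope := (div_le_iff₀ (sub_pos.2 hqz)).1 (hf.slope_anti_adjacent hp hz hpq' hqz)
  have hdrop : (f q - f p) / (q - p) * (z - q) = -(f q - c + 1) := by
    simp only [z, add_sub_cancel_left]
    field_simp [(by linarith : q - p ≠ 0), (by linarith : f p - f q ≠ 0)]
    ring
  linarith [hc z hz]

theorem ConcaveOn.monotoneOn_of_le {f : ℝ → ℝ} {s : Set ℝ} {y z : ℝ} (hf : ConcaveOn ℝ s f)
    (hz : z ∈ s) (hyz : y < z) (h : f y ≤ f z) : MonotoneOn f {x ∈ s | x ≤ y} := by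
  intro p hp q hq hpq
  have hqz : f q ≤ f z := (hf.left_le_of_le_right'' hq.1 hz hq.2 hyz h).trans h
  exact hf.left_le_of_le_right'' hp.1 hz hpq (hq.2.trans_lt hyz) hqz

theorem ConcaveOn.sub_const_mul {f : ℝ → ℝ} {s : Set ℝ} (hf : ConcaveOn ℝ s f) (k : ℝ) :
    ConcaveOn ℝ s (fun t => f t - k * t) :=
  hf.sub ((LinearMap.mulLeft ℝ k).convexOn hf.1)

theorem ConcaveOn.monotoneOn_sub_slope_mul {f : ℝ → ℝ} {s : Set ℝ} {x y : ℝ}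
    (hf : ConcaveOn ℝ s f) (hy : y ∈ s) (hxy : x < y) :
    MonotoneOn (fun t => f t - slope f x y * t) {t ∈ s | t ≤ x} := by
  have h : (y - x) * slope f x y = f y - f x := sub_smul_slope f x y
  exact (hf.sub_const_mul _).monotoneOn_of_le hy hxy (by linarith)

theorem sum_insert_update_mul_min {T : Finset ℝ} {M u : ℝ} (hT : ∀ s ∈ T, s < M) (hu : u ≤ M)
    (a : ℝ → ℝ) (k : ℝ) :
    ∑ s ∈ insert M T, Function.update a M k s * min u s = k * u + ∑ s ∈ T, a s * min u s := by
  rw [sum_insert fun h => (hT M h).false, Function.update_self, min_eq_left hu]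
  congr 1
  exact sum_congr rfl fun s hs => by rw [Function.update_of_ne (hT s hs).ne]

theorem ConcaveOn.exists_nonneg_sum_min_eq {b : ℝ} {φ : ℝ → ℝ}
    (hconc : ConcaveOn ℝ (Set.Icc 0 b) φ) (hmono : MonotoneOn φ (Set.Icc 0 b)) (h0 : φ 0 = 0)
    {T : Finset ℝ} (hT : ∀ t ∈ T, t ∈ Set.Icc 0 b) :
    ∃ a : ℝ → ℝ, (∀ s ∈ T, 0 ≤ a s) ∧ ∀ t ∈ T, φ t = ∑ s ∈ T, a s * min t s := by
  induction T using Finset.induction_on_max generalizing b φ with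
  | empty => exact ⟨0, by simp, by simp⟩
  | insert M T hlt ih =>
    have hM : M ∈ Set.Icc 0 b := hT M (mem_insert_self M T)
    have hle : ∀ u ∈ insert M T, u ≤ M := fun u hu =>
      (mem_insert.1 hu).elim le_of_eq fun h => (hlt u h).le
    rcases T.eq_empty_or_nonempty with rfl | hne
    · refine ⟨fun _ => φ M / M, fun _ _ => ?_, fun t ht => ?_⟩
      · exact div_nonneg (h0 ▸ hmono (Set.left_mem_Icc.2 (hM.1.trans hM.2)) hM hM.1) hM.1
      · obtain rfl := mem_singleton.1 ht
        rcases hM.1.eq_or_lt with rfl | hpos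
        · simp [h0]
        · simp [hpos.ne']
    -- on `insert M T`, `φ t = k * t + ψ (min t M')` where `ψ t = φ t - k * t` and `k` is the
    -- slope of the last chord; the induction hypothesis applies to `ψ` on `[0, M']`
    set M' := T.max' hne
    have hM'T : M' ∈ T := T.max'_mem hne
    have hM'M : M' < M := hlt M' hM'T
    have hM' : M' ∈ Set.Icc 0 b := hT M' (mem_insert_of_mem hM'T)
    set k := slope φ M' M
    have hk : 0 ≤ k := hmono.slope_nonneg hM' hM
    have hkM : (M - M') * k = φ M - φ M' := sub_smul_slope φ M' M
    have hconcM := hconc.subset (Set.Icc_subset_Icc_right hM.2) (convex_Icc 0 M)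
    obtain ⟨a, ha, hrep⟩ := ih
      ((hconcM.sub_const_mul k).subset (Set.Icc_subset_Icc_right hM'M.le) (convex_Icc 0 M'))
      ((hconcM.monotoneOn_sub_slope_mul (Set.right_mem_Icc.2 hM.1) hM'M).mono
        fun t ht => ⟨⟨ht.1, ht.2.trans hM'M.le⟩, ht.2⟩)
      (by simp [h0]) fun t ht => ⟨(hT t (mem_insert_of_mem ht)).1, T.le_max' t ht⟩
    refine ⟨Function.update a M k, fun s hs => ?_, fun t ht => ?_⟩
    · rcases mem_insert.1 hs with rfl | hs
      · simpa using hk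
      · simpa [Function.update_of_ne (hlt s hs).ne] using ha s hs
    rw [sum_insert_update_mul_min hlt (hle t ht)]
    rcases mem_insert.1 ht with rfl | ht
    · have hψ : ∑ s ∈ T, a s * min t s = φ M' - k * M' := by
        rw [hrep M' hM'T]
        refine sum_congr rfl fun s hs => ?_
        rw [min_eq_right (hlt s hs).le, min_eq_right (T.le_max' s hs)]
      rw [hψ]
      linarith
    · rw [← hrep t ht]
      ring

theorem sum_le_sum_of_sum_min_le {ι κ : Type*} [Fintype ι] [Fintype κ] {φ : ℝ → ℝ}
    (hconc : ConcaveOn ℝ (Set.Ici 0) φ) (hmono : MonotoneOn φ (Set.Ici 0)) (h0 : φ 0 = 0)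
    {y : ι → ℝ} {x : κ → ℝ} (hy : ∀ i, 0 ≤ y i) (hx : ∀ j, 0 ≤ x j)
    (h : ∀ s, 0 ≤ s → ∑ i, min (y i) s ≤ ∑ j, min (x j) s) :
    ∑ i, φ (y i) ≤ ∑ j, φ (x j) := by
  classical
  set T := univ.image y ∪ univ.image x
  have hyT : ∀ i, y i ∈ T := fun i => mem_union_left _ (mem_image_of_mem y (mem_univ i))
  have hxT : ∀ j, x j ∈ T := fun j => mem_union_right _ (mem_image_of_mem x (mem_univ j))
  have hT : ∀ t ∈ T, 0 ≤ t := by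
    simp only [T, mem_union, mem_image, mem_univ, true_and]
    rintro t (⟨i, rfl⟩ | ⟨j, rfl⟩)
    exacts [hy i, hx j]
  obtain ⟨a, ha, hrep⟩ := ConcaveOn.exists_nonneg_sum_min_eq
    (hconc.subset Set.Icc_subset_Ici_self (convex_Icc _ _)) (hmono.mono Set.Icc_subset_Ici_self)
    h0 fun t ht => ⟨hT t ht, single_le_sum hT ht⟩
  calc ∑ i, φ (y i) = ∑ s ∈ T, a s * ∑ i, min (y i) s := by
        simp_rw [hrep _ (hyT _), mul_sum]
        exact sum_comm
    _ ≤ ∑ s ∈ T, a s * ∑ j, min (x j) s :=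
        sum_le_sum fun s hs => mul_le_mul_of_nonneg_left (h s (hT s hs)) (ha s hs)
    _ = ∑ j, φ (x j) := by
        simp_rw [hrep _ (hxT _), mul_sum]
        exact sum_comm

noncomputable def spectralProjection {A : Type*} [Ring A] [StarRing A] [Algebra ℝ A]
    [TopologicalSpace A] [ContinuousFunctionalCalculus ℝ A IsSelfAdjoint] (s : ℝ) (a : A) : A :=
  cfc ((Set.Ioi s).indicator 1) a

namespace Matrix

theorem rank_add_le {K m n : Type*} [Field K] [Fintype n] (A B : Matrix m n K) :
    (A + B).rank ≤ A.rank + B.rank := by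
  rw [rank, rank, rank, mulVecLin_add]
  calc Module.finrank K (LinearMap.range (A.mulVecLin + B.mulVecLin))
      ≤ Module.finrank K ↥(LinearMap.range A.mulVecLin ⊔ LinearMap.range B.mulVecLin) :=
        Submodule.finrank_mono (LinearMap.range_add_le _ _)
    _ ≤ _ := Submodule.finrank_add_le_finrank_add_finrank _ _

theorem PosSemidef.re_diag_star_mul_mul_nonneg {𝕜 n : Type*} [RCLike 𝕜] [Fintype n]
    {X : Matrix n n 𝕜} (hX : X.PosSemidef) (U : Matrix n n 𝕜) (i : n) :
    0 ≤ RCLike.re ((star U * X * U) i i) :=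
  (RCLike.nonneg_iff.1 ((hX.conjTranspose_mul_mul_same U).diag_nonneg (i := i))).1

variable {𝕜 n : Type*} [RCLike 𝕜] [Fintype n] [DecidableEq n]

theorem continuousOn_spectrum_real (A : Matrix n n 𝕜) (f : ℝ → ℝ) :
    ContinuousOn f (spectrum ℝ A) :=
  A.finite_real_spectrum.continuousOn f

theorem isStarProjection_spectralProjection (s : ℝ) (A : Matrix n n 𝕜) :
    IsStarProjection (spectralProjection s A) where
  isIdempotentElem := by
    rw [IsIdempotentElem, spectralProjection, ← cfc_mul _ _ A (A.continuousOn_spectrum_real _)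
      (A.continuousOn_spectrum_real _)]
    congr 1
    funext x
    by_cases hx : x ∈ Set.Ioi s <;> simp [hx]
  isSelfAdjoint := cfc_predicate _ A

theorem mul_spectralProjection_zero {A : Matrix n n 𝕜} (hA : 0 ≤ A) :
    A * spectralProjection 0 A = A := by
  calc A * spectralProjection 0 A = cfc (fun x : ℝ => x * (Set.Ioi 0).indicator 1 x) A := by
        rw [cfc_mul _ _ A (continuousOn_id' _) (A.continuousOn_spectrum_real _), cfc_id' ℝ A]
        rfl
    _ = cfc (fun x : ℝ => x) A := cfc_congr fun x hx => by
        rcases (spectrum_nonneg_of_nonneg hA hx).eq_or_lt with rfl | hx0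
        · simp
        · simp [hx0]
    _ = A := cfc_id' ℝ A

theorem IsStarProjection.le_spectralProjection_zero_add {p q : Matrix n n 𝕜}
    (hp : IsStarProjection p) (hq : 0 ≤ q) : p ≤ spectralProjection 0 (p + q) := by
  set Q := spectralProjection 0 (p + q)
  have hker : (p + q) * (1 - Q) = 0 := by
    rw [mul_sub, mul_one, mul_spectralProjection_zero (add_nonneg hp.nonneg hq), sub_self]
  have hconj : star (1 - Q) * p * (1 - Q) = 0 := by
    refine le_antisymm ?_ (star_left_conjugate_nonneg hp.nonneg _)
    calc star (1 - Q) * p * (1 - Q) ≤ star (1 - Q) * (p + q) * (1 - Q) :=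
          star_left_conjugate_le_conjugate (le_add_of_nonneg_right hq) _
      _ = 0 := by rw [mul_assoc, hker, mul_zero]
  have hpQ : p * (1 - Q) = 0 := by
    rw [← conjTranspose_mul_self_eq_zero, conjTranspose_mul, ← star_eq_conjTranspose,
      ← star_eq_conjTranspose, hp.isSelfAdjoint.star_eq, ← mul_assoc, mul_assoc _ p p,
      hp.isIdempotentElem.eq, hconj]
  refine hp.le_of_mul_eq_left (isStarProjection_spectralProjection _ _) ?_
  rwa [mul_sub, mul_one, sub_eq_zero, eq_comm] at hpQ

namespace IsHermitian

variable {A : Matrix n n 𝕜} (hA : A.IsHermitian)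
include hA

theorem trace_cfc (f : ℝ → ℝ) : (cfc f A).trace = ∑ i, (f (hA.eigenvalues i) : 𝕜) := by
  rw [hA.cfc_eq, IsHermitian.cfc, Unitary.conjStarAlgAut_apply, trace_mul_cycle,
    Unitary.coe_star_mul_self, one_mul, trace_diagonal]
  rfl

theorem re_trace_cfc (f : ℝ → ℝ) : RCLike.re (cfc f A).trace = ∑ i, f (hA.eigenvalues i) := by
  simp [hA.trace_cfc]

theorem rank_cfc (f : ℝ → ℝ) :
    (cfc f A).rank = Fintype.card {i // f (hA.eigenvalues i) ≠ 0} := by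
  rw [hA.cfc_eq, IsHermitian.cfc, Unitary.conjStarAlgAut_apply, ← Unitary.coe_star]
  simp [-isUnit_iff_ne_zero, -Unitary.coe_star, rank_diagonal]

theorem re_trace_spectralProjection_eq_rank (s : ℝ) :
    RCLike.re (spectralProjection s A).trace = (spectralProjection s A).rank := by
  rw [spectralProjection, hA.re_trace_cfc, hA.rank_cfc, Fintype.card_subtype]
  simp [Set.indicator_apply, sum_boole]

theorem re_trace_mul_eq_sum (X : Matrix n n 𝕜) :
    RCLike.re (A * X).trace = ∑ i, hA.eigenvalues i * RCLike.re
      ((star (hA.eigenvectorUnitary : Matrix n n 𝕜) * X * hA.eigenvectorUnitary) i i) := by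
  conv_lhs => rw [hA.spectral_theorem, Unitary.conjStarAlgAut_apply]
  rw [mul_assoc, trace_mul_cycle, trace_mul_comm, trace, map_sum]
  simp [diagonal_mul]

theorem re_trace_cfc_min_le {X : Matrix n n 𝕜} (hX0 : 0 ≤ X) (hX1 : X ≤ 1) (s : ℝ) :
    RCLike.re (cfc (min · s) A).trace ≤ RCLike.re (A * X).trace + s * RCLike.re (1 - X).trace := by
  set U := (hA.eigenvectorUnitary : Matrix n n 𝕜)
  set q : n → ℝ := fun i => RCLike.re ((star U * X * U) i i)
  have hconj : star U * (1 - X) * U = 1 - star U * X * U := by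
    rw [mul_sub, sub_mul, mul_one, Unitary.coe_star_mul_self]
  have hq1 : ∀ i, q i ≤ 1 := fun i => by
    simpa [q, hconj] using
      (nonneg_iff_posSemidef.1 (sub_nonneg.2 hX1)).re_diag_star_mul_mul_nonneg U i
  have htr : RCLike.re (1 - X).trace = ∑ i, (1 - q i) := by
    have hcyc : (star U * (1 - X) * U).trace = (1 - X).trace := by
      rw [trace_mul_cycle, show U * star U = 1 from Unitary.coe_mul_star_self _, one_mul]
    rw [← hcyc, hconj, trace, map_sum]
    simp [q]
  rw [hA.re_trace_cfc, hA.re_trace_mul_eq_sum, htr, mul_sum, ← sum_add_distrib]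
  refine sum_le_sum fun i _ => ?_
  have hq0 : 0 ≤ q i := (nonneg_iff_posSemidef.1 hX0).re_diag_star_mul_mul_nonneg U i
  rcases le_total (hA.eigenvalues i) s with h | h
  · rw [min_eq_left h]
    nlinarith [hq1 i]
  · rw [min_eq_right h]
    nlinarith [hq1 i]

theorem re_trace_cfc_min_eq (s : ℝ) :
    RCLike.re (cfc (min · s) A).trace = RCLike.re (A * (1 - spectralProjection s A)).trace
      + s * RCLike.re (spectralProjection s A).trace := by
  have hc := A.continuousOn_spectrum_real
  have hAP : A * (1 - spectralProjection s A)
      = cfc (fun t : ℝ => t * (1 - (Set.Ioi s).indicator 1 t)) A := by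
    rw [cfc_mul (fun t : ℝ => t) _ A (hc _) (hc _),
      cfc_sub (fun _ : ℝ => (1 : ℝ)) _ A (hc _) (hc _), cfc_id' ℝ A, cfc_const_one ℝ A]
    rfl
  rw [hA.re_trace_cfc, hAP, hA.re_trace_cfc, spectralProjection, hA.re_trace_cfc, mul_sum,
    ← sum_add_distrib]
  refine sum_congr rfl fun i _ => ?_
  by_cases h : s < hA.eigenvalues i
  · simp [h, min_eq_right h.le]
  · simp [h, min_eq_left (not_lt.1 h)]

end IsHermitian

theorem PosSemidef.rank_spectralProjection_zero {A : Matrix n n 𝕜} (hA : A.PosSemidef) :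
    (spectralProjection 0 A).rank = A.rank := by
  rw [spectralProjection, hA.1.rank_cfc, hA.1.rank_eq_card_non_zero_eigs]
  refine Fintype.card_congr (Equiv.subtypeEquivRight fun i => ?_)
  simp [Set.indicator_apply, (hA.eigenvalues_nonneg i).lt_iff_ne']

theorem PosSemidef.re_trace_mul_nonneg {A X : Matrix n n 𝕜} (hA : A.PosSemidef)
    (hX : X.PosSemidef) : 0 ≤ RCLike.re (A * X).trace := by
  rw [hA.1.re_trace_mul_eq_sum]
  exact sum_nonneg fun i _ =>
    mul_nonneg (hA.eigenvalues_nonneg i) (hX.re_diag_star_mul_mul_nonneg _ i)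

theorem PosSemidef.re_trace_cfc_min_add_le {A B : Matrix n n 𝕜} (hA : A.PosSemidef)
    (hB : B.PosSemidef) {s : ℝ} (hs : 0 ≤ s) :
    RCLike.re (cfc (min · s) (A + B)).trace
      ≤ RCLike.re (cfc (min · s) A).trace + RCLike.re (cfc (min · s) B).trace := by
  set P₁ := spectralProjection s A
  set P₂ := spectralProjection s B
  set Q := spectralProjection 0 (P₁ + P₂)
  have hP₁ : IsStarProjection P₁ := isStarProjection_spectralProjection s A
  have hP₂ : IsStarProjection P₂ := isStarProjection_spectralProjection s B
  have hQ : IsStarProjection Q := isStarProjection_spectralProjection 0 _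
  have hP₁Q : P₁ ≤ Q := hP₁.le_spectralProjection_zero_add hP₂.nonneg
  have hP₂Q : P₂ ≤ Q := by
    simpa only [Q, add_comm P₁] using hP₂.le_spectralProjection_zero_add hP₁.nonneg
  have htrQ : RCLike.re Q.trace ≤ RCLike.re P₁.trace + RCLike.re P₂.trace := by
    have hP : (P₁ + P₂).PosSemidef := nonneg_iff_posSemidef.1 (add_nonneg hP₁.nonneg hP₂.nonneg)
    rw [hP.1.re_trace_spectralProjection_eq_rank, hP.rank_spectralProjection_zero,
      hA.1.re_trace_spectralProjection_eq_rank, hB.1.re_trace_spectralProjection_eq_rank]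
    exact_mod_cast rank_add_le P₁ P₂
  have htr_anti : ∀ {C P : Matrix n n 𝕜}, C.PosSemidef → P ≤ Q →
      RCLike.re (C * (1 - Q)).trace ≤ RCLike.re (C * (1 - P)).trace := by
    intro C P hC hPQ
    have := hC.re_trace_mul_nonneg (nonneg_iff_posSemidef.1 (sub_nonneg.2 hPQ))
    rw [show C * (Q - P) = C * (1 - P) - C * (1 - Q) by noncomm_ring, trace_sub, map_sub] at this
    linarith
  calc RCLike.re (cfc (min · s) (A + B)).trace
      ≤ RCLike.re ((A + B) * (1 - Q)).trace + s * RCLike.re (1 - (1 - Q)).trace :=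
        (hA.add hB).1.re_trace_cfc_min_le hQ.one_sub_nonneg (sub_le_self _ hQ.nonneg) s
    _ = RCLike.re (A * (1 - Q)).trace + RCLike.re (B * (1 - Q)).trace
          + s * RCLike.re Q.trace := by
        rw [add_mul, trace_add, map_add, sub_sub_cancel]
    _ ≤ RCLike.re (A * (1 - P₁)).trace + RCLike.re (B * (1 - P₂)).trace
          + s * (RCLike.re P₁.trace + RCLike.re P₂.trace) :=
        add_le_add (add_le_add (htr_anti hA hP₁Q) (htr_anti hB hP₂Q))
          (mul_le_mul_of_nonneg_left htrQ hs)
    _ = RCLike.re (cfc (min · s) A).trace + RCLike.re (cfc (min · s) B).trace := by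
        rw [hA.1.re_trace_cfc_min_eq, hB.1.re_trace_cfc_min_eq]
        ring

theorem re_trace_cfc_min_sum_le {ι : Type*} (t : Finset ι) {B : ι → Matrix n n 𝕜}
    (hB : ∀ k ∈ t, (B k).PosSemidef) {s : ℝ} (hs : 0 ≤ s) :
    RCLike.re (cfc (min · s) (∑ k ∈ t, B k)).trace
      ≤ ∑ k ∈ t, RCLike.re (cfc (min · s) (B k)).trace := by
  induction t using Finset.cons_induction with
  | empty => simp [hs]
  | cons k t _ ih =>
    rw [sum_cons, sum_cons]
    have hBt : ∀ j ∈ t, (B j).PosSemidef := fun j hj => hB j (mem_cons_of_mem hj)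
    exact ((hB k (mem_cons_self k t)).re_trace_cfc_min_add_le (posSemidef_sum t hBt) hs).trans
      (add_le_add le_rfl (ih hBt))

theorem re_trace_cfc_sum_le {ι : Type*} [Fintype ι] {φ : ℝ → ℝ}
    (hconc : ConcaveOn ℝ (Set.Ici 0) φ) (hmono : MonotoneOn φ (Set.Ici 0)) (h0 : φ 0 = 0)
    {B : ι → Matrix n n 𝕜} (hB : ∀ k, (B k).PosSemidef) :
    RCLike.re (cfc φ (∑ k, B k)).trace ≤ ∑ k, RCLike.re (cfc φ (B k)).trace := by
  have hC : (∑ k, B k).PosSemidef := posSemidef_sum _ fun k _ => hB k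
  have hmin := fun s (hs : 0 ≤ s) => re_trace_cfc_min_sum_le univ (fun k _ => hB k) hs
  simp only [hC.1.re_trace_cfc, (hB _).1.re_trace_cfc, ← Fintype.sum_prod_type'] at hmin ⊢
  exact sum_le_sum_of_sum_min_le hconc hmono h0 hC.eigenvalues_nonneg
    (fun p => (hB p.1).eigenvalues_nonneg p.2) hmin

theorem PosSemidef.trNorm_eq {M : Matrix n n ℂ} (hM : M.PosSemidef) : trNorm M = M.trace.re := by
  have hsq : cfc (fun x : ℝ => Real.sqrt (x ^ 2)) M = M := by
    rw [cfc_congr fun x hx => Real.sqrt_sq (spectrum_nonneg_of_nonneg hM.nonneg hx), cfc_id' ℝ M]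
  rw [trNorm, matAbs, msqrt, hM.1.eq, ← sq, ← cfc_comp_pow (R := ℝ) Real.sqrt 2 M, hsq]

theorem PosSemidef.posSemidef_cfc {A : Matrix n n 𝕜} (hA : A.PosSemidef) {f : ℝ → ℝ}
    (hf : ∀ t ∈ Set.Ici (0 : ℝ), 0 ≤ f t) : (cfc f A).PosSemidef :=
  nonneg_iff_posSemidef.1 (cfc_nonneg fun x hx => hf x (spectrum_nonneg_of_nonneg hA.nonneg hx))

end Matrix

theorem traceNorm_jensen_concave_general {n : Type*} [Fintype n] [DecidableEq n] {m : ℕ}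
    (φ : ℝ → ℝ) (hconc : ConcaveOn ℝ (Set.Ici 0) φ)
    (hφ0 : φ 0 = 0) (hφpos : ∀ t ∈ Set.Ici (0 : ℝ), 0 ≤ φ t)
    (B : Fin m → Matrix n n ℂ) (hB : ∀ k, (B k).PosSemidef) :
    trNorm (mfun φ (∑ k, B k)) ≤ trNorm (∑ k, mfun φ (B k)) := by
  have hC : (∑ k, B k).PosSemidef := posSemidef_sum _ fun k _ => hB k
  simp only [mfun]
  rw [(hC.posSemidef_cfc hφpos).trNorm_eq,
    (posSemidef_sum _ fun k _ => (hB k).posSemidef_cfc hφpos).trNorm_eq, trace_sum, Complex.re_sum]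
  exact re_trace_cfc_sum_le hconc
    (hconc.monotoneOn_of_bddBelow ⟨0, Set.forall_mem_image.2 hφpos⟩) hφ0 hB

/-- Jensen-type inequality for the trace norm and a concave function. -/
theorem traceNorm_jensen_concave {n : Type*} [Fintype n] [DecidableEq n] {m : ℕ}
    (φ : ℝ → ℝ) (hconc : ConcaveOn ℝ (Set.Ici 0) φ)
    (hcont : ContinuousOn φ (Set.Ici 0))
    (hφ0 : φ 0 = 0) (hφpos : ∀ t ∈ Set.Ici (0 : ℝ), 0 ≤ φ t)
    (B : Fin m → Matrix n n ℂ) (hB : ∀ k, (B k).PosSemidef) :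
    trNorm (mfun φ (∑ k, B k)) ≤ trNorm (∑ k, mfun φ (B k)) :=
  traceNorm_jensen_concave_general φ hconc hφ0 hφpos B hB
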